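/- arXiv:1802.04020 — 12 statements merged into one kernel-verified Lean document; each statement's English description precedes it below -/
import Mathlib

section
/- Let S be a nonempty finite set, c ≥ 0, and v ∈ ℝ^S. Then the truncated vector Γ_c v satisfies sp(Γ_c v) ≤ c, and for every z ∈ ℝ^S with sp(z) ≤ c one has sp(Γ_c v − v) ≤ sp(z − v); that is, Γ_c v is a projection of v onto the set {z ∈ ℝ^S : sp(z) ≤ c} in the span semi-norm. -/
open Finset

/-- Span semi-norm of a vector `v : S → ℝ` on a nonempty finite set `S`. -/
noncomputable def span {S : Type*} [Fintype S] [Nonempty S] (v : S → ℝ) : ℝ :=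
  Finset.univ.sup' Finset.univ_nonempty v - Finset.univ.inf' Finset.univ_nonempty v

/-- Truncation operator `Γ_c v (s) = min (v s) (min_x v x + c)`. -/
noncomputable def trunc {S : Type*} [Fintype S] [Nonempty S] (c : ℝ) (v : S → ℝ) : S → ℝ :=
  fun s => min (v s) (Finset.univ.inf' Finset.univ_nonempty v + c)

lemma span_nonneg {S : Type*} [Fintype S] [Nonempty S] (v : S → ℝ) : 0 ≤ span v := by
  obtain ⟨s⟩ := ‹Nonempty S›
  have h1 := Finset.inf'_le v (Finset.mem_univ s)
  have h2 := Finset.le_sup' (b := s) v (Finset.mem_univ s)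
  unfold span; linarith

theorem trunc_is_span_projection {S : Type*} [Fintype S] [Nonempty S]
    (c : ℝ) (hc : 0 ≤ c) (v : S → ℝ) :
    span (trunc c v) ≤ c ∧
      ∀ z : S → ℝ, span z ≤ c →
        span (fun s => trunc c v s - v s) ≤ span (fun s => z s - v s) := by
  classical
  set m := Finset.univ.inf' Finset.univ_nonempty v with hm
  set M := Finset.univ.sup' Finset.univ_nonempty v with hM
  constructor
  · have h1 : Finset.univ.sup' Finset.univ_nonempty (trunc c v) ≤ m + c :=
      Finset.sup'_le _ _ fun s _ => min_le_right _ _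
    have h2 : m ≤ Finset.univ.inf' Finset.univ_nonempty (trunc c v) :=
      Finset.le_inf' _ _ fun s _ =>
        le_min (Finset.inf'_le _ (Finset.mem_univ s)) (by linarith)
    unfold span; linarith
  · intro z hz
    obtain ⟨t, _, ht⟩ := Finset.exists_mem_eq_inf' (Finset.univ_nonempty) v
    obtain ⟨s, _, hs⟩ := Finset.exists_mem_eq_sup' (Finset.univ_nonempty) v
    -- bound span of residual w
    set w : S → ℝ := fun s => trunc c v s - v s with hw
    have hwsup : Finset.univ.sup' Finset.univ_nonempty w ≤ 0 :=
      Finset.sup'_le _ _ fun x _ => by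
        simp only [hw, trunc, sub_nonpos]; exact min_le_left _ _
    have hwinf : min 0 (m + c - M) ≤ Finset.univ.inf' Finset.univ_nonempty w := by
      refine Finset.le_inf' _ _ fun x _ => ?_
      have hxM : v x ≤ M := Finset.le_sup' v (Finset.mem_univ x)
      have : w x = min 0 (m + c - v x) := by
        simp only [hw, trunc]
        rcases le_total (v x) (m + c) with h | h
        · rw [min_eq_left h, min_eq_left (by linarith)]; ring
        · rw [min_eq_right h, min_eq_right (by linarith)]
      rw [this]
      exact min_le_min le_rfl (by linarith)
    have hspanw : span w ≤ max 0 (M - m - c) := by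
      unfold span
      rcases le_total 0 (m + c - M) with h | h
      · rw [min_eq_left h] at hwinf; linarith [le_max_left (0:ℝ) (M - m - c)]
      · rw [min_eq_right h] at hwinf; linarith [le_max_right (0:ℝ) (M - m - c)]
    -- lower bound on span (z - v)
    have h0 : (0:ℝ) ≤ span (fun s => z s - v s) := span_nonneg _
    have hzt : Finset.univ.inf' Finset.univ_nonempty z ≤ z t :=
      Finset.inf'_le _ (Finset.mem_univ t)
    have hzs : z s ≤ Finset.univ.sup' Finset.univ_nonempty z :=
      Finset.le_sup' z (Finset.mem_univ s)
    have hzv1 : z t - v t ≤ Finset.univ.sup' Finset.univ_nonempty (fun s => z s - v s) :=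
      Finset.le_sup' (fun s => z s - v s) (Finset.mem_univ t)
    have hzv2 : Finset.univ.inf' Finset.univ_nonempty (fun s => z s - v s) ≤ z s - v s :=
      Finset.inf'_le _ (Finset.mem_univ s)
    have hMms : M - m - c ≤ span (fun s => z s - v s) := by
      have hspz : span z ≤ c := hz
      unfold span at hspz ⊢
      have hvt : v t = m := ht.symm
      have hvs : v s = M := hs.symm
      linarith
    calc span w ≤ max 0 (M - m - c) := hspanw
      _ ≤ span (fun s => z s - v s) := max_le h0 hMms
end

section
/- Let S be a nonempty finite set and c ≥ 0. The truncation operator Γ_c is non-expansive in the span semi-norm, sp(Γ_c v − Γ_c u) ≤ sp(v − u); non-expansive in the sup norm, max_{s∈S} |Γ_c v(s) − Γ_c u(s)| ≤ max_{s∈S} |v(s) − u(s)|; and translation-equivariant: for every λ ∈ ℝ, Γ_c(v + λe) = Γ_c v + λe, where e ∈ ℝ^S is the all-ones vector. -/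
open Finset

lemma trunc_key {S : Type*} [Fintype S] [Nonempty S] (c : ℝ) (u v : S → ℝ) (s : S) :
    trunc c v s - trunc c u s ≤ Finset.univ.sup' Finset.univ_nonempty (fun x => v x - u x) := by
  obtain ⟨x, -, hxe⟩ := Finset.exists_mem_eq_inf' (Finset.univ_nonempty (α := S)) u
  by_cases h : u s ≤ Finset.univ.inf' Finset.univ_nonempty u + c
  · have h1 : trunc c u s = u s := min_eq_left h
    have h2 : trunc c v s ≤ v s := min_le_left _ _
    have h3 := Finset.le_sup' (fun x => v x - u x) (Finset.mem_univ s)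
    rw [h1]; linarith
  · push_neg at h
    have h1 : trunc c u s = Finset.univ.inf' Finset.univ_nonempty u + c := min_eq_right h.le
    have h2 : trunc c v s ≤ Finset.univ.inf' Finset.univ_nonempty v + c := min_le_right _ _
    have h3 : Finset.univ.inf' Finset.univ_nonempty v ≤ v x :=
      Finset.inf'_le _ (Finset.mem_univ x)
    have h4 := Finset.le_sup' (fun y => v y - u y) (Finset.mem_univ x)
    rw [h1, hxe]; linarith

theorem trunc_nonexpansive_and_translation {S : Type*} [Fintype S] [Nonempty S]
    (c : ℝ) (hc : 0 ≤ c) :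
    (∀ u v : S → ℝ,
        span (fun s => trunc c v s - trunc c u s) ≤ span (fun s => v s - u s)) ∧
    (∀ u v : S → ℝ,
        Finset.univ.sup' Finset.univ_nonempty (fun s => |trunc c v s - trunc c u s|)
          ≤ Finset.univ.sup' Finset.univ_nonempty (fun s => |v s - u s|)) ∧
    (∀ (v : S → ℝ) (lam : ℝ),
        trunc c (fun s => v s + lam) = fun s => trunc c v s + lam) := by
  have hinf : ∀ (u v : S → ℝ) (s : S),
      Finset.univ.inf' Finset.univ_nonempty (fun x => v x - u x)
        ≤ trunc c v s - trunc c u s := by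
    intro u v s
    obtain ⟨x, -, hxe⟩ := Finset.exists_mem_eq_sup' (Finset.univ_nonempty (α := S))
      (fun y => u y - v y)
    have h1 := trunc_key c v u s
    rw [hxe] at h1
    have h2 : Finset.univ.inf' Finset.univ_nonempty (fun y => v y - u y) ≤ v x - u x :=
      Finset.inf'_le _ (Finset.mem_univ x)
    linarith
  refine ⟨?_, ?_, ?_⟩
  · intro u v
    unfold span
    have hs : Finset.univ.sup' Finset.univ_nonempty (fun s => trunc c v s - trunc c u s)
        ≤ Finset.univ.sup' Finset.univ_nonempty (fun s => v s - u s) :=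
      Finset.sup'_le _ _ fun s _ => trunc_key c u v s
    have hi : Finset.univ.inf' Finset.univ_nonempty (fun s => v s - u s)
        ≤ Finset.univ.inf' Finset.univ_nonempty (fun s => trunc c v s - trunc c u s) :=
      Finset.le_inf' _ _ fun s _ => hinf u v s
    linarith
  · intro u v
    apply Finset.sup'_le
    intro s _
    rw [abs_le]
    constructor
    · have h1 := trunc_key c v u s
      have h2 : Finset.univ.sup' Finset.univ_nonempty (fun x => u x - v x)
          ≤ Finset.univ.sup' Finset.univ_nonempty (fun x => |v x - u x|) := by
        apply Finset.sup'_le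
        intro x _
        have := abs_sub_comm (v x) (u x)
        have := le_abs_self (u x - v x)
        calc u x - v x ≤ |u x - v x| := le_abs_self _
          _ = |v x - u x| := abs_sub_comm _ _
          _ ≤ _ := Finset.le_sup' (fun x => |v x - u x|) (Finset.mem_univ x)
      linarith
    · have h1 := trunc_key c u v s
      have h2 : Finset.univ.sup' Finset.univ_nonempty (fun x => v x - u x)
          ≤ Finset.univ.sup' Finset.univ_nonempty (fun x => |v x - u x|) :=
        Finset.sup'_le _ _ fun x _ =>
          le_trans (le_abs_self _) (Finset.le_sup' (fun x => |v x - u x|) (Finset.mem_univ x))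
      linarith
  · intro v lam
    funext s
    have hinfadd : Finset.univ.inf' Finset.univ_nonempty (fun x => v x + lam)
        = Finset.univ.inf' Finset.univ_nonempty v + lam := by
      apply le_antisymm
      · obtain ⟨x, -, hxe⟩ := Finset.exists_mem_eq_inf' (Finset.univ_nonempty (α := S)) v
        rw [hxe]
        exact Finset.inf'_le _ (Finset.mem_univ x)
      · apply Finset.le_inf'
        intro x _
        have := Finset.inf'_le v (Finset.mem_univ x)
        linarith
    simp only [trunc, hinfadd]
    rw [← min_add_add_right]
    ring_nf
end

section
/- Fix a finite MDP, c ≥ 0, v ∈ ℝ^S and a state s ∈ S. There exists a probability distribution δ on A_s such that T_c v(s) = Σ_{a∈A_s} δ(a) ( r(s,a) + Σ_{s'} p(s'|s,a) v(s') ) if and only if min_{a∈A_s} { r(s,a) + Σ_{s'} p(s'|s,a) v(s') } ≤ min_{s'∈S} Lv(s') + c. -/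
open Finset

/-- Optimal Bellman operator `L v (s) = max_a (r s a + Σ_{s'} p s a s' * v s')` of a
finite MDP with state space `S`, action spaces `A s`, rewards `r` and transition kernel `p`. -/
noncomputable def bellman {S : Type*} [Fintype S] [Nonempty S] {A : S → Type*}
    [∀ s, Fintype (A s)] [∀ s, Nonempty (A s)]
    (r : ∀ s, A s → ℝ) (p : ∀ s, A s → S → ℝ) (v : S → ℝ) : S → ℝ :=
  fun s => Finset.univ.sup' Finset.univ_nonempty
    (fun a : A s => r s a + ∑ s', p s a s' * v s')

/-- Span-truncated optimal Bellman operator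
`T_c v (s) = min (L v s) (min_x L v x + c)`. -/
noncomputable def Tc {S : Type*} [Fintype S] [Nonempty S] {A : S → Type*}
    [∀ s, Fintype (A s)] [∀ s, Nonempty (A s)]
    (c : ℝ) (r : ∀ s, A s → ℝ) (p : ∀ s, A s → S → ℝ) (v : S → ℝ) : S → ℝ :=
  fun s => min (bellman r p v s)
    (Finset.univ.inf' Finset.univ_nonempty (bellman r p v) + c)

/-- Bellman operator of a randomized decision rule `d`:
`L_d v (s) = Σ_a d s a * (r s a + Σ_{s'} p s a s' * v s')`. -/
noncomputable def bellmanD {S : Type*} [Fintype S] {A : S → Type*} [∀ s, Fintype (A s)]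
    (r : ∀ s, A s → ℝ) (p : ∀ s, A s → S → ℝ)
    (d : ∀ s, A s → ℝ) (v : S → ℝ) : S → ℝ :=
  fun s => ∑ a, d s a * (r s a + ∑ s', p s a s' * v s')

lemma exists_combo {α : Type*} [Fintype α] [Nonempty α] (f : α → ℝ) (x : ℝ)
    (h1 : Finset.univ.inf' Finset.univ_nonempty f ≤ x)
    (h2 : x ≤ Finset.univ.sup' Finset.univ_nonempty f) :
    ∃ δ : α → ℝ, (∀ a, 0 ≤ δ a) ∧ (∑ a, δ a = 1) ∧ x = ∑ a, δ a * f a := by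
  classical
  obtain ⟨a0, -, h0⟩ := Finset.exists_mem_eq_inf' Finset.univ_nonempty f
  obtain ⟨a1, -, ha1⟩ := Finset.exists_mem_eq_sup' Finset.univ_nonempty f
  have hmx : f a0 ≤ x := by rw [← h0]; exact h1
  have hxM : x ≤ f a1 := by rw [← ha1]; exact h2
  rcases eq_or_lt_of_le (hmx.trans hxM) with heq | hlt
  · refine ⟨fun a => if a = a0 then 1 else 0, fun a => by positivity, by simp, ?_⟩
    simp only [ite_mul, one_mul, zero_mul, Finset.sum_ite_eq', Finset.mem_univ, if_true]
    linarith
  · set t : ℝ := (x - f a0) / (f a1 - f a0) with ht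
    have hMm : (0:ℝ) < f a1 - f a0 := by linarith
    have ht0 : 0 ≤ t := div_nonneg (by linarith) hMm.le
    have ht1 : t ≤ 1 := by rw [ht, div_le_one hMm]; linarith
    refine ⟨fun a => t * (if a = a1 then 1 else 0) + (1 - t) * (if a = a0 then 1 else 0),
      fun a => add_nonneg (mul_nonneg ht0 (by split <;> norm_num)) (mul_nonneg (by linarith) (by split <;> norm_num)), ?_, ?_⟩
    · simp [Finset.sum_add_distrib, ← Finset.mul_sum]
    · have : ∑ a, (t * (if a = a1 then 1 else 0) + (1 - t) * (if a = a0 then 1 else 0)) * f a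
          = t * f a1 + (1 - t) * f a0 := by
        simp [add_mul, Finset.sum_add_distrib, mul_assoc, ← Finset.mul_sum, ite_mul]
      rw [this]
      field_simp [ht]
      have hx : t * (f a1 - f a0) = x - f a0 := by rw [ht]; exact div_mul_cancel₀ _ hMm.ne'
      linarith

theorem Tc_feasible_iff {S : Type*} [Fintype S] [Nonempty S] {A : S → Type*}
    [∀ s, Fintype (A s)] [∀ s, Nonempty (A s)]
    (r : ∀ s, A s → ℝ) (p : ∀ s, A s → S → ℝ)
    (hp0 : ∀ s a s', 0 ≤ p s a s') (hp1 : ∀ s a, ∑ s', p s a s' = 1)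
    (c : ℝ) (hc : 0 ≤ c) (v : S → ℝ) (s : S) :
    (∃ δ : A s → ℝ, (∀ a, 0 ≤ δ a) ∧ (∑ a, δ a = 1) ∧
        Tc c r p v s = ∑ a, δ a * (r s a + ∑ s', p s a s' * v s')) ↔
      Finset.univ.inf' Finset.univ_nonempty (fun a : A s => r s a + ∑ s', p s a s' * v s')
        ≤ Finset.univ.inf' Finset.univ_nonempty (bellman r p v) + c := by
  classical
  set f : A s → ℝ := fun a => r s a + ∑ s', p s a s' * v s' with hf
  constructor
  · rintro ⟨δ, hδ0, hδ1, heq⟩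
    have h1 : Finset.univ.inf' Finset.univ_nonempty f ≤ ∑ a, δ a * f a := by
      calc Finset.univ.inf' Finset.univ_nonempty f
          = ∑ a, δ a * Finset.univ.inf' Finset.univ_nonempty f := by
            rw [← Finset.sum_mul, hδ1, one_mul]
        _ ≤ ∑ a, δ a * f a := Finset.sum_le_sum fun a _ =>
            mul_le_mul_of_nonneg_left (Finset.inf'_le f (Finset.mem_univ a)) (hδ0 a)
    rw [← heq] at h1
    exact h1.trans (min_le_right _ _)
  · intro h
    obtain ⟨δ, h0, h1, h2⟩ := exists_combo f (Tc c r p v s)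
      (le_min (le_trans (Finset.inf'_le f (Finset.mem_univ (Classical.arbitrary _))) (Finset.le_sup' f (Finset.mem_univ (Classical.arbitrary _)))) h) (min_le_left _ _)
    exact ⟨δ, h0, h1, h2⟩
end

section
/- Fix a finite MDP, c ≥ 0 and v ∈ ℝ^S. The operator T_c is globally feasible at v — i.e., for every state s there is a probability distribution δ_s on A_s with T_c v(s) = Σ_{a∈A_s} δ_s(a)( r(s,a) + Σ_{s'} p(s'|s,a) v(s') ) — if and only if D(c,v) is nonempty. Moreover, in that case the randomized decision rule δ⁺ defined by these distributions belongs to D(c,v) and satisfies L_{δ⁺} v = T_c v, so T_c v is the componentwise maximum of L_d v over d ∈ D(c,v). -/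
open Finset

lemma sum_prob_le_sup' {α : Type*} [Fintype α] [Nonempty α] (d f : α → ℝ)
    (h0 : ∀ a, 0 ≤ d a) (h1 : ∑ a, d a = 1) :
    ∑ a, d a * f a ≤ Finset.univ.sup' Finset.univ_nonempty f := by
  calc ∑ a, d a * f a ≤ ∑ a, d a * Finset.univ.sup' Finset.univ_nonempty f := by
        refine Finset.sum_le_sum fun a _ => ?_
        exact mul_le_mul_of_nonneg_left (Finset.le_sup' f (mem_univ a)) (h0 a)
    _ = Finset.univ.sup' Finset.univ_nonempty f := by rw [← Finset.sum_mul, h1, one_mul]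

/-- Part 3: any `d ∈ D(c,v)` has `L_d v ≤ T_c v` pointwise. -/
lemma bellmanD_le_Tc {S : Type*} [Fintype S] [Nonempty S] {A : S → Type*}
    [∀ s, Fintype (A s)] [∀ s, Nonempty (A s)]
    (r : ∀ s, A s → ℝ) (p : ∀ s, A s → S → ℝ) (c : ℝ) (v : S → ℝ)
    (d : ∀ s, A s → ℝ) (h0 : ∀ s a, 0 ≤ d s a) (h1 : ∀ s, ∑ a, d s a = 1)
    (hsp : span (bellmanD r p d v) ≤ c) :
    ∀ s, bellmanD r p d v s ≤ Tc c r p v s := by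
  intro s
  have hle : ∀ x, bellmanD r p d v x ≤ bellman r p v x := fun x =>
    sum_prob_le_sup' (d x) _ (h0 x) (h1 x)
  refine le_min (hle s) ?_
  have h2 : bellmanD r p d v s ≤
      Finset.univ.inf' Finset.univ_nonempty (bellmanD r p d v) + c := by
    have := Finset.le_sup' (bellmanD r p d v) (mem_univ s)
    simp only [span] at hsp
    linarith
  have h3 : Finset.univ.inf' Finset.univ_nonempty (bellmanD r p d v) ≤
      Finset.univ.inf' Finset.univ_nonempty (bellman r p v) :=
    Finset.le_inf' _ _ fun x _ =>
      le_trans (Finset.inf'_le _ (mem_univ x)) (hle x)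
  linarith

/-- Part 2: if `L_d v = T_c v` then `sp(L_d v) ≤ c`. -/
lemma span_le_of_eq_Tc {S : Type*} [Fintype S] [Nonempty S] {A : S → Type*}
    [∀ s, Fintype (A s)] [∀ s, Nonempty (A s)]
    (r : ∀ s, A s → ℝ) (p : ∀ s, A s → S → ℝ) (c : ℝ) (hc : 0 ≤ c) (v : S → ℝ)
    (w : S → ℝ) (hw : ∀ s, w s = Tc c r p v s) : span w ≤ c := by
  set m := Finset.univ.inf' Finset.univ_nonempty (bellman r p v) with hm
  have hsup : Finset.univ.sup' Finset.univ_nonempty w ≤ m + c := by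
    refine Finset.sup'_le _ _ fun s _ => ?_
    rw [hw s]; exact min_le_right _ _
  have hinf : m ≤ Finset.univ.inf' Finset.univ_nonempty w := by
    refine Finset.le_inf' _ _ fun s _ => ?_
    rw [hw s]
    exact le_min (Finset.inf'_le _ (mem_univ s)) (by linarith)
  simp only [span]; linarith

theorem Tc_globally_feasible_iff {S : Type*} [Fintype S] [Nonempty S] {A : S → Type*}
    [∀ s, Fintype (A s)] [∀ s, Nonempty (A s)]
    (r : ∀ s, A s → ℝ) (p : ∀ s, A s → S → ℝ)
    (hp0 : ∀ s a s', 0 ≤ p s a s') (hp1 : ∀ s a, ∑ s', p s a s' = 1)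
    (c : ℝ) (hc : 0 ≤ c) (v : S → ℝ) :
    -- global feasibility iff `D(c,v)` nonempty
    ((∀ s, ∃ δ : A s → ℝ, (∀ a, 0 ≤ δ a) ∧ (∑ a, δ a = 1) ∧
        Tc c r p v s = ∑ a, δ a * (r s a + ∑ s', p s a s' * v s')) ↔
      (∃ d : ∀ s, A s → ℝ, (∀ s a, 0 ≤ d s a) ∧ (∀ s, ∑ a, d s a = 1) ∧
        span (bellmanD r p d v) ≤ c)) ∧
    -- the decision rule `δ⁺` formed by the feasible distributions belongs to `D(c,v)`
    (∀ d : ∀ s, A s → ℝ, (∀ s a, 0 ≤ d s a) → (∀ s, ∑ a, d s a = 1) →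
      (∀ s, bellmanD r p d v s = Tc c r p v s) →
        span (bellmanD r p d v) ≤ c) ∧
    -- `T_c v` is the componentwise maximum of `L_d v` over `d ∈ D(c,v)`
    (∀ d : ∀ s, A s → ℝ, (∀ s a, 0 ≤ d s a) → (∀ s, ∑ a, d s a = 1) →
      span (bellmanD r p d v) ≤ c → ∀ s, bellmanD r p d v s ≤ Tc c r p v s) := by
  refine ⟨⟨fun h => ?_, fun ⟨d, h0, h1, hsp⟩ s => ?_⟩,
    fun d h0 h1 heq => span_le_of_eq_Tc r p c hc v _ heq,
    fun d h0 h1 hsp => bellmanD_le_Tc r p c v d h0 h1 hsp⟩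
  · -- forward: assemble the δ's into a decision rule
    choose δ hδ0 hδ1 hδeq using h
    exact ⟨δ, hδ0, hδ1, span_le_of_eq_Tc r p c hc v _ fun s => (hδeq s).symm⟩
  · -- backward: build a feasible δ at state s from d ∈ D(c,v)
    set f : A s → ℝ := fun a => r s a + ∑ s', p s a s' * v s' with hf
    set M := Finset.univ.sup' Finset.univ_nonempty f with hM
    set L := ∑ a, d s a * f a with hL
    have hLM : L ≤ M := sum_prob_le_sup' (d s) f (h0 s) (h1 s)
    have hLT : L ≤ Tc c r p v s := bellmanD_le_Tc r p c v d h0 h1 hsp s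
    have hTM : Tc c r p v s ≤ M := min_le_left _ _
    obtain ⟨a₀, -, ha₀⟩ := Finset.exists_mem_eq_sup' (Finset.univ_nonempty (α := A s)) f
    rcases eq_or_lt_of_le hLM with hEq | hLt
    · exact ⟨d s, h0 s, h1 s, by rw [← hL]; linarith⟩
    · classical
      set t := (Tc c r p v s - L) / (M - L) with ht
      have ht0 : 0 ≤ t := div_nonneg (by linarith) (by linarith)
      have ht1 : t ≤ 1 := by
        rw [div_le_one (by linarith)]; linarith
      have htM : t * (M - L) = Tc c r p v s - L := by
        rw [ht]; exact div_mul_cancel₀ _ (sub_ne_zero.mpr hLt.ne')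
      refine ⟨fun a => (1 - t) * d s a + t * (if a = a₀ then 1 else 0), fun a => ?_, ?_, ?_⟩
      · show (0:ℝ) ≤ (1 - t) * d s a + t * (if a = a₀ then 1 else 0)
        have h4 : (0:ℝ) ≤ if a = a₀ then 1 else 0 := by positivity
        have h5 := h0 s a
        nlinarith
      · rw [Finset.sum_add_distrib, ← Finset.mul_sum, ← Finset.mul_sum, h1 s,
          Finset.sum_ite_eq' Finset.univ a₀ (fun _ => (1:ℝ))]
        simp
      · have hsum : ∑ a, ((1 - t) * d s a + t * (if a = a₀ then 1 else 0)) * f a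
            = (1 - t) * L + t * f a₀ := by
          rw [hL, Finset.mul_sum]
          rw [show (∑ a, ((1 - t) * d s a + t * (if a = a₀ then 1 else 0)) * f a)
            = ∑ a, ((1 - t) * (d s a * f a) + t * ((if a = a₀ then 1 else 0) * f a)) from
            Finset.sum_congr rfl fun a _ => by ring]
          rw [Finset.sum_add_distrib, ← Finset.mul_sum]
          congr 1
          rw [← Finset.mul_sum]
          congr 1
          simp [ite_mul, Finset.sum_ite_eq']
        rw [hsum, ← ha₀, ← hM]
        linarith
end

section
/- Fix a finite MDP and c ≥ 0. For every v ∈ ℝ^S, T_c v(s) ≤ Lv(s) for all s ∈ S; if moreover sp(v) ≤ c and v(s) ≤ Lv(s) for all s, then v(s) ≤ T_c v(s) for all s. In addition, T_c is translation-equivariant: for every λ ∈ ℝ, T_c(v + λe) = T_c v + λe, where e ∈ ℝ^S is the all-ones vector. -/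
open Finset

theorem Tc_le_bellman_and_translation {S : Type*} [Fintype S] [Nonempty S] {A : S → Type*}
    [∀ s, Fintype (A s)] [∀ s, Nonempty (A s)]
    (r : ∀ s, A s → ℝ) (p : ∀ s, A s → S → ℝ)
    (hp0 : ∀ s a s', 0 ≤ p s a s') (hp1 : ∀ s a, ∑ s', p s a s' = 1)
    (c : ℝ) (hc : 0 ≤ c) :
    (∀ v : S → ℝ, ∀ s, Tc c r p v s ≤ bellman r p v s) ∧
    (∀ v : S → ℝ, span v ≤ c → (∀ s, v s ≤ bellman r p v s) →
      ∀ s, v s ≤ Tc c r p v s) ∧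
    (∀ (v : S → ℝ) (lam : ℝ),
      Tc c r p (fun s => v s + lam) = fun s => Tc c r p v s + lam) := by
  refine ⟨fun v s => min_le_left _ _, ?_, ?_⟩
  · intro v hsp hle s
    refine le_min (hle s) ?_
    have h1 : v s ≤ Finset.univ.sup' Finset.univ_nonempty v :=
      Finset.le_sup' v (Finset.mem_univ s)
    have h2 : Finset.univ.sup' Finset.univ_nonempty v ≤
        Finset.univ.inf' Finset.univ_nonempty v + c := by
      have := hsp; unfold span at this; linarith
    have h3 : Finset.univ.inf' Finset.univ_nonempty v + c ≤
        Finset.univ.inf' Finset.univ_nonempty (bellman r p v) + c := by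
      gcongr
      exact hle _
    linarith
  · intro v lam
    have hsup : ∀ (s : S) (f : A s → ℝ),
        Finset.univ.sup' Finset.univ_nonempty (fun a => f a + lam) =
        Finset.univ.sup' Finset.univ_nonempty f + lam := by
      intro s f
      apply le_antisymm
      · apply Finset.sup'_le
        intro a _
        linarith [Finset.le_sup' f (Finset.mem_univ a)]
      · have h : Finset.univ.sup' Finset.univ_nonempty f ≤
            Finset.univ.sup' Finset.univ_nonempty (fun a => f a + lam) - lam := by
          apply Finset.sup'_le
          intro a _
          have := Finset.le_sup' (fun a => f a + lam) (Finset.mem_univ a)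
          linarith
        linarith
    have hinf : ∀ (f : S → ℝ),
        Finset.univ.inf' Finset.univ_nonempty (fun a => f a + lam) =
        Finset.univ.inf' Finset.univ_nonempty f + lam := by
      intro f
      apply le_antisymm
      · have h : Finset.univ.inf' Finset.univ_nonempty (fun a => f a + lam) - lam ≤
            Finset.univ.inf' Finset.univ_nonempty f := by
          apply Finset.le_inf'
          intro a _
          have := Finset.inf'_le (fun a => f a + lam) (Finset.mem_univ a)
          linarith
        linarith
      · apply Finset.le_inf'
        intro a _
        linarith [Finset.inf'_le f (Finset.mem_univ a)]
    have hb : bellman r p (fun s => v s + lam) = fun s => bellman r p v s + lam := by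
      funext s
      unfold bellman
      have key : (fun a : A s => r s a + ∑ s', p s a s' * ((fun t => v t + lam) s')) =
          fun a : A s => (r s a + ∑ s', p s a s' * v s') + lam := by
        funext a
        have h1 : ∑ s', p s a s' * (v s' + lam) = (∑ s', p s a s' * v s') + lam := by
          rw [show (∑ s', p s a s' * (v s' + lam)) =
              (∑ s', p s a s' * v s') + (∑ s', p s a s') * lam by
            rw [Finset.sum_mul, ← Finset.sum_add_distrib]; congr 1; funext s'; ring,
            hp1 s a, one_mul]
        simp only [h1]
        ring
      rw [key]; exact hsup s (fun a : A s => r s a + ∑ s', p s a s' * v s')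
    funext s
    unfold Tc
    rw [hb]
    have : Finset.univ.inf' Finset.univ_nonempty (fun s => bellman r p v s + lam) =
        Finset.univ.inf' Finset.univ_nonempty (bellman r p v) + lam := hinf _
    rw [this]
    rw [show Finset.univ.inf' Finset.univ_nonempty (bellman r p v) + lam + c
        = Finset.univ.inf' Finset.univ_nonempty (bellman r p v) + c + lam by ring]
    exact min_add_add_right _ _ _
end

section
/- Fix a finite MDP and c ≥ 0. The operator T_c is non-expansive in the span semi-norm, sp(T_c v − T_c u) ≤ sp(v − u), and in the sup norm, max_{s∈S} |T_c v(s) − T_c u(s)| ≤ max_{s∈S} |v(s) − u(s)|, for all u, v ∈ ℝ^S. Moreover, if L is a γ-span contraction for some γ, then T_c is also a γ-span contraction: sp(T_c v − T_c u) ≤ γ·sp(v − u) for all u, v. -/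
open Finset

set_option linter.unusedSectionVars false

section Aux
variable {S : Type*} [Fintype S] [Nonempty S] {A : S → Type*}
    [∀ s, Fintype (A s)] [∀ s, Nonempty (A s)]
    (r : ∀ s, A s → ℝ) (p : ∀ s, A s → S → ℝ)

lemma prob_sum_le (hp0 : ∀ s a s', 0 ≤ p s a s') (hp1 : ∀ s a, ∑ s', p s a s' = 1)
    (s : S) (a : A s) (w : S → ℝ) :
    ∑ s', p s a s' * w s' ≤ Finset.univ.sup' Finset.univ_nonempty w := by
  calc ∑ s', p s a s' * w s'
      ≤ ∑ s', p s a s' * Finset.univ.sup' Finset.univ_nonempty w := by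
        refine Finset.sum_le_sum fun s' _ => ?_
        exact mul_le_mul_of_nonneg_left (Finset.le_sup' w (Finset.mem_univ s')) (hp0 s a s')
    _ = Finset.univ.sup' Finset.univ_nonempty w := by
        rw [← Finset.sum_mul, hp1, one_mul]

lemma le_prob_sum (hp0 : ∀ s a s', 0 ≤ p s a s') (hp1 : ∀ s a, ∑ s', p s a s' = 1)
    (s : S) (a : A s) (w : S → ℝ) :
    Finset.univ.inf' Finset.univ_nonempty w ≤ ∑ s', p s a s' * w s' := by
  calc Finset.univ.inf' Finset.univ_nonempty w
      = ∑ s', p s a s' * Finset.univ.inf' Finset.univ_nonempty w := by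
        rw [← Finset.sum_mul, hp1, one_mul]
    _ ≤ ∑ s', p s a s' * w s' := by
        refine Finset.sum_le_sum fun s' _ => ?_
        exact mul_le_mul_of_nonneg_left (Finset.inf'_le w (Finset.mem_univ s')) (hp0 s a s')

lemma diff_sum (s : S) (a : A s) (u v : S → ℝ) :
    ∑ s', p s a s' * (v s' - u s') =
      (∑ s', p s a s' * v s') - ∑ s', p s a s' * u s' := by
  rw [← Finset.sum_sub_distrib]; congr 1; ext s'; ring

lemma bellman_sandwich (hp0 : ∀ s a s', 0 ≤ p s a s') (hp1 : ∀ s a, ∑ s', p s a s' = 1)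
    (u v : S → ℝ) (s : S) :
    Finset.univ.inf' Finset.univ_nonempty (fun x => v x - u x)
      ≤ bellman r p v s - bellman r p u s ∧
    bellman r p v s - bellman r p u s
      ≤ Finset.univ.sup' Finset.univ_nonempty (fun x => v x - u x) := by
  constructor
  · rw [le_sub_iff_add_le, add_comm, ← le_sub_iff_add_le]
    unfold bellman
    refine Finset.sup'_le _ _ fun a _ => ?_
    rw [le_sub_iff_add_le]
    have h1 := le_prob_sum p hp0 hp1 s a (fun x => v x - u x)
    have h2 := diff_sum p s a u v
    have key : (r s a + ∑ s', p s a s' * u s') +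
        Finset.univ.inf' Finset.univ_nonempty (fun x => v x - u x)
        ≤ r s a + ∑ s', p s a s' * v s' := by linarith
    exact key.trans (Finset.le_sup' (fun a : A s => r s a + ∑ s', p s a s' * v s')
      (Finset.mem_univ a))
  · rw [sub_le_iff_le_add]
    unfold bellman
    refine Finset.sup'_le _ _ fun a _ => ?_
    have h1 := prob_sum_le p hp0 hp1 s a (fun x => v x - u x)
    have h2 := diff_sum p s a u v
    have h3 := Finset.le_sup' (fun a : A s => r s a + ∑ s', p s a s' * u s')
      (Finset.mem_univ a)
    linarith

lemma Tc_sandwich (hp0 : ∀ s a s', 0 ≤ p s a s') (hp1 : ∀ s a, ∑ s', p s a s' = 1)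
    (c : ℝ) (u v : S → ℝ) (s : S) :
    Finset.univ.inf' Finset.univ_nonempty (fun x => bellman r p v x - bellman r p u x)
      ≤ Tc c r p v s - Tc c r p u s ∧
    Tc c r p v s - Tc c r p u s
      ≤ Finset.univ.sup' Finset.univ_nonempty (fun x => bellman r p v x - bellman r p u x) := by
  have hsup : ∀ x, bellman r p v x - bellman r p u x ≤
      Finset.univ.sup' Finset.univ_nonempty (fun x => bellman r p v x - bellman r p u x) :=
    fun x => Finset.le_sup' (fun x => bellman r p v x - bellman r p u x) (Finset.mem_univ x)
  have hinf : ∀ x,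
      Finset.univ.inf' Finset.univ_nonempty (fun x => bellman r p v x - bellman r p u x)
      ≤ bellman r p v x - bellman r p u x :=
    fun x => Finset.inf'_le (fun x => bellman r p v x - bellman r p u x) (Finset.mem_univ x)
  have hmvmu : Finset.univ.inf' Finset.univ_nonempty (bellman r p v) -
      Finset.univ.sup' Finset.univ_nonempty (fun x => bellman r p v x - bellman r p u x)
      ≤ Finset.univ.inf' Finset.univ_nonempty (bellman r p u) := by
    refine Finset.le_inf' _ _ fun x _ => ?_
    have := Finset.inf'_le (bellman r p v) (Finset.mem_univ x)
    linarith [hsup x]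
  have hmumv : Finset.univ.inf' Finset.univ_nonempty (bellman r p u) +
      Finset.univ.inf' Finset.univ_nonempty (fun x => bellman r p v x - bellman r p u x)
      ≤ Finset.univ.inf' Finset.univ_nonempty (bellman r p v) := by
    refine Finset.le_inf' _ _ fun x _ => ?_
    have := Finset.inf'_le (bellman r p u) (Finset.mem_univ x)
    linarith [hinf x]
  have hA := min_le_left (bellman r p u s)
    (Finset.univ.inf' Finset.univ_nonempty (bellman r p u) + c)
  have hB := min_le_right (bellman r p u s)
    (Finset.univ.inf' Finset.univ_nonempty (bellman r p u) + c)
  have hA' := min_le_left (bellman r p v s)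
    (Finset.univ.inf' Finset.univ_nonempty (bellman r p v) + c)
  have hB' := min_le_right (bellman r p v s)
    (Finset.univ.inf' Finset.univ_nonempty (bellman r p v) + c)
  simp only [Tc]
  constructor
  · have hmin : min (bellman r p u s)
        (Finset.univ.inf' Finset.univ_nonempty (bellman r p u) + c) +
        Finset.univ.inf' Finset.univ_nonempty (fun x => bellman r p v x - bellman r p u x)
        ≤ min (bellman r p v s)
        (Finset.univ.inf' Finset.univ_nonempty (bellman r p v) + c) := by
      refine le_min ?_ ?_
      · linarith [hinf s]
      · linarith
    linarith
  · have hmin : min (bellman r p v s)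
        (Finset.univ.inf' Finset.univ_nonempty (bellman r p v) + c)
        ≤ min (bellman r p u s)
        (Finset.univ.inf' Finset.univ_nonempty (bellman r p u) + c) +
        Finset.univ.sup' Finset.univ_nonempty (fun x => bellman r p v x - bellman r p u x) := by
      rw [← sub_le_iff_le_add]
      refine le_min ?_ ?_
      · linarith [hsup s]
      · linarith
    linarith

end Aux


theorem Tc_nonexpansive_and_contraction {S : Type*} [Fintype S] [Nonempty S] {A : S → Type*}
    [∀ s, Fintype (A s)] [∀ s, Nonempty (A s)]
    (r : ∀ s, A s → ℝ) (p : ∀ s, A s → S → ℝ)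
    (hp0 : ∀ s a s', 0 ≤ p s a s') (hp1 : ∀ s a, ∑ s', p s a s' = 1)
    (c : ℝ) (hc : 0 ≤ c) :
    (∀ u v : S → ℝ,
        span (fun s => Tc c r p v s - Tc c r p u s) ≤ span (fun s => v s - u s)) ∧
    (∀ u v : S → ℝ,
        Finset.univ.sup' Finset.univ_nonempty (fun s => |Tc c r p v s - Tc c r p u s|)
          ≤ Finset.univ.sup' Finset.univ_nonempty (fun s => |v s - u s|)) ∧
    (∀ γ : ℝ,
      (∀ u v : S → ℝ,
          span (fun s => bellman r p u s - bellman r p v s) ≤ γ * span (fun s => u s - v s)) →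
      ∀ u v : S → ℝ,
        span (fun s => Tc c r p v s - Tc c r p u s) ≤ γ * span (fun s => v s - u s)) := by
  refine ⟨?_, ?_, ?_⟩
  · intro u v
    have hT := fun s => Tc_sandwich r p hp0 hp1 c u v s
    have hB := fun x => bellman_sandwich r p hp0 hp1 u v x
    have h1 : Finset.univ.sup' Finset.univ_nonempty (fun s => Tc c r p v s - Tc c r p u s)
        ≤ Finset.univ.sup' Finset.univ_nonempty
          (fun x => bellman r p v x - bellman r p u x) :=
      Finset.sup'_le _ _ fun s _ => (hT s).2
    have h2 : Finset.univ.sup' Finset.univ_nonempty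
        (fun x => bellman r p v x - bellman r p u x)
        ≤ Finset.univ.sup' Finset.univ_nonempty (fun x => v x - u x) :=
      Finset.sup'_le _ _ fun x _ => (hB x).2
    have h3 : Finset.univ.inf' Finset.univ_nonempty (fun x => v x - u x)
        ≤ Finset.univ.inf' Finset.univ_nonempty
          (fun x => bellman r p v x - bellman r p u x) :=
      Finset.le_inf' _ _ fun x _ => (hB x).1
    have h4 : Finset.univ.inf' Finset.univ_nonempty
        (fun x => bellman r p v x - bellman r p u x)
        ≤ Finset.univ.inf' Finset.univ_nonempty (fun s => Tc c r p v s - Tc c r p u s) :=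
      Finset.le_inf' _ _ fun s _ => (hT s).1
    unfold span
    linarith
  · intro u v
    have hT := fun s => Tc_sandwich r p hp0 hp1 c u v s
    have hB := fun x => bellman_sandwich r p hp0 hp1 u v x
    have hL1 : Finset.univ.sup' Finset.univ_nonempty
        (fun x => bellman r p v x - bellman r p u x)
        ≤ Finset.univ.sup' Finset.univ_nonempty (fun x => v x - u x) :=
      Finset.sup'_le _ _ fun x _ => (hB x).2
    have hL2 : Finset.univ.inf' Finset.univ_nonempty (fun x => v x - u x)
        ≤ Finset.univ.inf' Finset.univ_nonempty
          (fun x => bellman r p v x - bellman r p u x) :=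
      Finset.le_inf' _ _ fun x _ => (hB x).1
    have hN1 : Finset.univ.sup' Finset.univ_nonempty (fun x => v x - u x)
        ≤ Finset.univ.sup' Finset.univ_nonempty (fun s => |v s - u s|) :=
      Finset.sup'_le _ _ fun x _ => (le_abs_self _).trans
        (Finset.le_sup' (fun s => |v s - u s|) (Finset.mem_univ x))
    have hN2 : -(Finset.univ.sup' Finset.univ_nonempty (fun s => |v s - u s|))
        ≤ Finset.univ.inf' Finset.univ_nonempty (fun x => v x - u x) := by
      refine Finset.le_inf' _ _ fun x _ => ?_
      have h1 := neg_abs_le (v x - u x)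
      have h2 := Finset.le_sup' (fun s => |v s - u s|) (Finset.mem_univ x)
      linarith
    refine Finset.sup'_le _ _ fun s _ => abs_le.2 ⟨?_, ?_⟩
    · linarith [(hT s).1]
    · linarith [(hT s).2]
  · intro γ hγ u v
    have hkey := hγ v u
    have hT := fun s => Tc_sandwich r p hp0 hp1 c u v s
    have h1 : Finset.univ.sup' Finset.univ_nonempty (fun s => Tc c r p v s - Tc c r p u s)
        ≤ Finset.univ.sup' Finset.univ_nonempty
          (fun x => bellman r p v x - bellman r p u x) :=
      Finset.sup'_le _ _ fun s _ => (hT s).2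
    have h4 : Finset.univ.inf' Finset.univ_nonempty
        (fun x => bellman r p v x - bellman r p u x)
        ≤ Finset.univ.inf' Finset.univ_nonempty (fun s => Tc c r p v s - Tc c r p u s) :=
      Finset.le_inf' _ _ fun s _ => (hT s).1
    unfold span at hkey ⊢
    linarith
end

section
/- Fix a finite MDP, c ≥ 0, and suppose L is a γ-span contraction with 0 ≤ γ < 1. Then there exist g⁺ ∈ ℝ and h⁺ ∈ ℝ^S solving the optimality equation T_c h⁺ = h⁺ + g⁺ e, where e ∈ ℝ^S is the all-ones vector. -/
open Finset

section aux
variable {S : Type*} [Fintype S] [Nonempty S]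

lemma min_sub_min_le (a b x y : ℝ) : min a x - min b y ≤ max (a - b) (x - y) := by
  rcases le_total b y with h | h
  · rw [min_eq_left h]
    exact (sub_le_sub_right (min_le_left a x) b).trans (le_max_left _ _)
  · rw [min_eq_right h]
    exact (sub_le_sub_right (min_le_right a x) y).trans (le_max_right _ _)

lemma min_sub_min_ge (a b x y : ℝ) : min (a - b) (x - y) ≤ min a x - min b y := by
  rcases le_total a x with h | h
  · rw [min_eq_left h]
    have := min_le_left b y
    have := min_le_left (a - b) (x - y)
    linarith
  · rw [min_eq_right h]
    have := min_le_right b y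
    have := min_le_right (a - b) (x - y)
    linarith

lemma span_nonneg_s10 (w : S → ℝ) : 0 ≤ span w := by
  obtain ⟨s⟩ := ‹Nonempty S›
  have h1 : Finset.univ.inf' Finset.univ_nonempty w ≤ w s := Finset.inf'_le _ (mem_univ s)
  have h2 : w s ≤ Finset.univ.sup' Finset.univ_nonempty w := Finset.le_sup' _ (mem_univ s)
  simp only [span]; linarith

lemma span_shift (w : S → ℝ) (k : ℝ) : span (fun s => w s - k) = span w := by
  have hs : Finset.univ.sup' Finset.univ_nonempty (fun s => w s - k)
      = Finset.univ.sup' Finset.univ_nonempty w - k := by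
    apply le_antisymm
    · exact Finset.sup'_le _ _ fun s _ =>
        sub_le_sub_right (Finset.le_sup' w (mem_univ s)) k
    · rw [sub_le_iff_le_add]
      refine Finset.sup'_le _ _ fun s _ => ?_
      have := Finset.le_sup' (fun s => w s - k) (mem_univ s)
      linarith
  have hi : Finset.univ.inf' Finset.univ_nonempty (fun s => w s - k)
      = Finset.univ.inf' Finset.univ_nonempty w - k := by
    apply le_antisymm
    · obtain ⟨t, _, ht⟩ := Finset.exists_mem_eq_inf' (univ_nonempty (α := S)) w
      have h2 := Finset.inf'_le (fun s => w s - k) (mem_univ t)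
      rw [ht]; linarith
    · refine Finset.le_inf' _ _ fun s _ => ?_
      have := Finset.inf'_le w (mem_univ s)
      linarith
  simp only [span, hs, hi]; ring

lemma abs_le_span (w : S → ℝ) (s₀ : S) (h0 : w s₀ = 0) (s : S) : |w s| ≤ span w := by
  have h1 : w s ≤ Finset.univ.sup' Finset.univ_nonempty w := Finset.le_sup' _ (mem_univ s)
  have h2 : Finset.univ.inf' Finset.univ_nonempty w ≤ w s := Finset.inf'_le _ (mem_univ s)
  have h3 : w s₀ ≤ Finset.univ.sup' Finset.univ_nonempty w := Finset.le_sup' _ (mem_univ s₀)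
  have h4 : Finset.univ.inf' Finset.univ_nonempty w ≤ w s₀ := Finset.inf'_le _ (mem_univ s₀)
  rw [h0] at h3 h4
  rw [abs_le]; constructor <;> simp only [span] <;> linarith

lemma span_le_two_norm (w : S → ℝ) : span w ≤ 2 * ‖w‖ := by
  have hs : Finset.univ.sup' Finset.univ_nonempty w ≤ ‖w‖ :=
    Finset.sup'_le _ _ fun s _ => (le_abs_self _).trans (norm_le_pi_norm w s)
  have hi : -‖w‖ ≤ Finset.univ.inf' Finset.univ_nonempty w :=
    Finset.le_inf' _ _ fun s _ => neg_le_of_abs_le (norm_le_pi_norm w s)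
  simp only [span]; linarith

lemma span_Tc_le {A : S → Type*} [∀ s, Fintype (A s)] [∀ s, Nonempty (A s)]
    (c : ℝ) (r : ∀ s, A s → ℝ) (p : ∀ s, A s → S → ℝ) (u v : S → ℝ) :
    span (fun s => Tc c r p u s - Tc c r p v s)
      ≤ span (fun s => bellman r p u s - bellman r p v s) := by
  set Lu := bellman r p u with hLu
  set Lv := bellman r p v with hLv
  set Mu := Finset.univ.inf' Finset.univ_nonempty Lu with hMu
  set Mv := Finset.univ.inf' Finset.univ_nonempty Lv with hMv
  have hMdiff_le : Mu - Mv ≤ Finset.univ.sup' Finset.univ_nonempty (fun s => Lu s - Lv s) := by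
    obtain ⟨t, _, ht⟩ := Finset.exists_mem_eq_inf' (univ_nonempty (α := S)) Lv
    have h1 : Mu ≤ Lu t := Finset.inf'_le _ (mem_univ t)
    have h2 : Lu t - Lv t ≤ _ := Finset.le_sup' (fun s => Lu s - Lv s) (mem_univ t)
    rw [hMv, ← ht] at *
    linarith
  have hMdiff_ge : Finset.univ.inf' Finset.univ_nonempty (fun s => Lu s - Lv s) ≤ Mu - Mv := by
    obtain ⟨t, _, ht⟩ := Finset.exists_mem_eq_inf' (univ_nonempty (α := S)) Lu
    have h1 : Mv ≤ Lv t := Finset.inf'_le _ (mem_univ t)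
    have h2 : _ ≤ Lu t - Lv t := Finset.inf'_le (fun s => Lu s - Lv s) (mem_univ t)
    rw [hMu, ← ht] at *
    linarith
  have hsup : Finset.univ.sup' Finset.univ_nonempty (fun s => Tc c r p u s - Tc c r p v s)
      ≤ Finset.univ.sup' Finset.univ_nonempty (fun s => Lu s - Lv s) := by
    refine Finset.sup'_le _ _ fun s _ => ?_
    have h1 : Lu s - Lv s ≤ _ := Finset.le_sup' (fun s => Lu s - Lv s) (mem_univ s)
    have h2 := min_sub_min_le (Lu s) (Lv s) (Mu + c) (Mv + c)
    simp only [Tc, ← hLu, ← hLv, ← hMu, ← hMv]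
    have h3 : Mu + c - (Mv + c) = Mu - Mv := by ring
    rw [h3] at h2
    exact h2.trans (max_le h1 hMdiff_le)
  have hinf : Finset.univ.inf' Finset.univ_nonempty (fun s => Lu s - Lv s)
      ≤ Finset.univ.inf' Finset.univ_nonempty (fun s => Tc c r p u s - Tc c r p v s) := by
    refine Finset.le_inf' _ _ fun s _ => ?_
    have h1 : _ ≤ Lu s - Lv s := Finset.inf'_le (fun s => Lu s - Lv s) (mem_univ s)
    have h2 := min_sub_min_ge (Lu s) (Lv s) (Mu + c) (Mv + c)
    simp only [Tc, ← hLu, ← hLv, ← hMu, ← hMv]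
    have h3 : Mu + c - (Mv + c) = Mu - Mv := by ring
    rw [h3] at h2
    exact (le_min h1 hMdiff_ge).trans h2
  simp only [span]; linarith

end aux

theorem Tc_optimality_equation_exists {S : Type*} [Fintype S] [Nonempty S] {A : S → Type*}
    [∀ s, Fintype (A s)] [∀ s, Nonempty (A s)]
    (r : ∀ s, A s → ℝ) (p : ∀ s, A s → S → ℝ)
    (hp0 : ∀ s a s', 0 ≤ p s a s') (hp1 : ∀ s a, ∑ s', p s a s' = 1)
    (c : ℝ) (hc : 0 ≤ c)
    (γ : ℝ) (hγ0 : 0 ≤ γ) (hγ1 : γ < 1)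
    (hL : ∀ u v : S → ℝ,
      span (fun s => bellman r p u s - bellman r p v s) ≤ γ * span (fun s => u s - v s)) :
    ∃ (g : ℝ) (h : S → ℝ), ∀ s, Tc c r p h s = h s + g := by
  classical
  obtain ⟨s₀⟩ := ‹Nonempty S›
  set T : (S → ℝ) → (S → ℝ) := Tc c r p with hT
  set F : (S → ℝ) → (S → ℝ) := fun v s => T v s - T v s₀ with hF
  -- key contraction estimate in span
  have key : ∀ u v : S → ℝ,
      span (fun s => F u s - F v s) ≤ γ * span (fun s => u s - v s) := by
    intro u v
    have h1 : (fun s => F u s - F v s)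
        = fun s => (T u s - T v s) - (T u s₀ - T v s₀) := by
      funext s; simp only [hF]; ring
    rw [h1, span_shift (fun s => T u s - T v s) (T u s₀ - T v s₀)]
    exact (span_Tc_le c r p u v).trans (hL u v)
  have hF0 : ∀ v, F v s₀ = 0 := fun v => by simp [hF]
  -- distance bounds
  have dist_le_span : ∀ u v : S → ℝ, dist (F u) (F v) ≤ span (fun s => F u s - F v s) := by
    intro u v
    rw [dist_pi_le_iff (span_nonneg_s10 _)]
    intro s
    rw [Real.dist_eq]
    exact abs_le_span (fun s => F u s - F v s) s₀ (by simp [hF0]) s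
  -- the iterates
  set vs : ℕ → S → ℝ := fun n => F^[n] (fun _ => 0) with hvs
  have hvsucc : ∀ n, vs (n + 1) = F (vs n) := fun n => Function.iterate_succ_apply' F n _
  set D : ℕ → ℝ := fun n => span (fun s => vs n s - vs (n + 1) s) with hD
  have hDg : ∀ n, D n ≤ D 0 * γ ^ n := by
    intro n
    induction n with
    | zero => simp
    | succ n ih =>
      have h1 : D (n + 1) ≤ γ * D n := by
        simpa only [hD, hvsucc] using key (vs n) (vs (n + 1))
      calc D (n + 1) ≤ γ * D n := h1
        _ ≤ γ * (D 0 * γ ^ n) := by nlinarith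
        _ = D 0 * γ ^ (n + 1) := by ring
  have hvs0 : ∀ n, vs n s₀ = 0 := by
    intro n
    cases n with
    | zero => rfl
    | succ n => rw [hvsucc]; exact hF0 _
  have hdist : ∀ n, dist (vs n) (vs (n + 1)) ≤ D 0 * γ ^ n := by
    intro n
    refine le_trans ?_ (hDg n)
    rw [dist_pi_le_iff (span_nonneg_s10 _)]
    intro s
    rw [Real.dist_eq]
    exact abs_le_span (fun s => vs n s - vs (n + 1) s) s₀
      (by show vs n s₀ - vs (n + 1) s₀ = 0; rw [hvs0, hvs0]; ring) s
  have hcauchy : CauchySeq vs := cauchySeq_of_le_geometric γ (D 0) hγ1 hdist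
  obtain ⟨h, hh⟩ := cauchySeq_tendsto_of_complete hcauchy
  -- F h = h
  have hFh : F h = h := by
    have hbound : ∀ n, dist (F h) h ≤ 2 * γ * dist h (vs n) + dist (vs (n + 1)) h := by
      intro n
      have h1 : dist (F h) (F (vs n)) ≤ 2 * γ * dist h (vs n) := by
        refine (dist_le_span h (vs n)).trans ?_
        refine (key h (vs n)).trans ?_
        have h2 : span (fun s => h s - vs n s) ≤ 2 * ‖h - vs n‖ := by
          have := span_le_two_norm (S := S) (h - vs n)
          exact this
        rw [dist_eq_norm]
        nlinarith
      calc dist (F h) h ≤ dist (F h) (F (vs n)) + dist (F (vs n)) h := dist_triangle _ _ _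
        _ ≤ 2 * γ * dist h (vs n) + dist (vs (n + 1)) h := by
            rw [hvsucc n]; linarith
    have htend : Filter.Tendsto (fun n => 2 * γ * dist h (vs n) + dist (vs (n + 1)) h)
        Filter.atTop (nhds 0) := by
      have t1 : Filter.Tendsto (fun n => dist h (vs n)) Filter.atTop (nhds 0) := by
        simpa [dist_comm] using tendsto_iff_dist_tendsto_zero.mp hh
      have t2 : Filter.Tendsto (fun n => dist (vs (n + 1)) h) Filter.atTop (nhds 0) :=
        (tendsto_iff_dist_tendsto_zero.mp hh).comp (Filter.tendsto_add_atTop_nat 1)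
      have := ((t1.const_mul (2 * γ)).add t2)
      simpa using this
    have : dist (F h) h ≤ 0 := ge_of_tendsto' htend hbound
    exact dist_le_zero.mp this
  refine ⟨T h s₀, h, fun s => ?_⟩
  have := congrFun hFh s
  simp only [hF] at this
  simp only [hT] at *
  linarith
end

section
/- Fix a finite MDP, c ≥ 0, and suppose L is a γ-span contraction with 0 ≤ γ < 1. Let (g⁺, h⁺) ∈ ℝ × ℝ^S satisfy the optimality equation T_c h⁺ = h⁺ + g⁺ e. Then for every randomized decision rule d, every g ∈ ℝ and every h ∈ ℝ^S satisfying the evaluation equation L_d h = h + g e together with sp(h) ≤ c, one has g ≤ g⁺. -/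
open Finset

theorem Tc_gain_dominance {S : Type*} [Fintype S] [Nonempty S] {A : S → Type*}
    [∀ s, Fintype (A s)] [∀ s, Nonempty (A s)]
    (r : ∀ s, A s → ℝ) (p : ∀ s, A s → S → ℝ)
    (hp0 : ∀ s a s', 0 ≤ p s a s') (hp1 : ∀ s a, ∑ s', p s a s' = 1)
    (c : ℝ) (hc : 0 ≤ c)
    (γ : ℝ) (hγ0 : 0 ≤ γ) (hγ1 : γ < 1)
    (hL : ∀ u v : S → ℝ,
      span (fun s => bellman r p u s - bellman r p v s) ≤ γ * span (fun s => u s - v s))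
    (gp : ℝ) (hp : S → ℝ) (Hopt : ∀ s, Tc c r p hp s = hp s + gp)
    (d : ∀ s, A s → ℝ) (hd0 : ∀ s a, 0 ≤ d s a) (hd1 : ∀ s, ∑ a, d s a = 1)
    (g : ℝ) (h : S → ℝ)
    (Heval : ∀ s, bellmanD r p d h s = h s + g)
    (hspan : span h ≤ c) :
    g ≤ gp := by
  classical
  obtain ⟨t, _, ht⟩ := Finset.exists_mem_eq_sup' (Finset.univ_nonempty (α := S))
    (fun s => h s - hp s)
  set M := Finset.univ.sup' Finset.univ_nonempty (fun s => h s - hp s) with hMdef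
  have hle : ∀ s, h s ≤ hp s + M := by
    intro s
    have := Finset.le_sup' (f := fun s => h s - hp s) (Finset.mem_univ s)
    linarith [this]
  -- bellman is monotone + shift
  have hbell : ∀ s, bellman r p h s ≤ bellman r p hp s + M := by
    intro s
    unfold bellman
    apply Finset.sup'_le
    intro a _
    have h1 : ∑ s', p s a s' * h s' ≤ ∑ s', p s a s' * hp s' + M := by
      have : ∑ s', p s a s' * h s' ≤ ∑ s', p s a s' * (hp s' + M) :=
        Finset.sum_le_sum fun s' _ => mul_le_mul_of_nonneg_left (hle s') (hp0 s a s')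
      have h2 : ∑ s', p s a s' * (hp s' + M) = ∑ s', p s a s' * hp s' + M := by
        simp [mul_add, Finset.sum_add_distrib, ← Finset.sum_mul, hp1 s a]
      linarith
    have h2 : r s a + ∑ s', p s a s' * hp s' ≤ Finset.univ.sup' Finset.univ_nonempty
        (fun a : A s => r s a + ∑ s', p s a s' * hp s') :=
      Finset.le_sup' (fun a : A s => r s a + ∑ s', p s a s' * hp s') (Finset.mem_univ a)
    linarith
  -- Tc bound at t
  have hTc : Tc c r p h t ≤ Tc c r p hp t + M := by
    have hinf : Finset.univ.inf' Finset.univ_nonempty (bellman r p h) ≤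
        Finset.univ.inf' Finset.univ_nonempty (bellman r p hp) + M := by
      obtain ⟨x, _, hx⟩ := Finset.exists_mem_eq_inf' (Finset.univ_nonempty (α := S))
        (bellman r p hp)
      calc Finset.univ.inf' Finset.univ_nonempty (bellman r p h) ≤ bellman r p h x :=
            Finset.inf'_le _ (Finset.mem_univ x)
        _ ≤ bellman r p hp x + M := hbell x
        _ = _ := by rw [hx]
    unfold Tc
    have hmm : min (bellman r p h t)
        (Finset.univ.inf' Finset.univ_nonempty (bellman r p h) + c) ≤
        min (bellman r p hp t + M)
        ((Finset.univ.inf' Finset.univ_nonempty (bellman r p hp) + c) + M) :=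
      min_le_min (hbell t) (by linarith)
    rw [min_add_add_right] at hmm
    exact hmm
  -- L_d h ≤ L h
  have hDle : ∀ s, bellmanD r p d h s ≤ bellman r p h s := by
    intro s
    unfold bellmanD bellman
    calc ∑ a, d s a * (r s a + ∑ s', p s a s' * h s')
        ≤ ∑ a, d s a * Finset.univ.sup' Finset.univ_nonempty
            (fun a : A s => r s a + ∑ s', p s a s' * h s') := by
          refine Finset.sum_le_sum fun a _ => mul_le_mul_of_nonneg_left ?_ (hd0 s a)
          exact Finset.le_sup' (fun a : A s => r s a + ∑ s', p s a s' * h s')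
            (Finset.mem_univ a)
      _ = Finset.univ.sup' Finset.univ_nonempty
            (fun a : A s => r s a + ∑ s', p s a s' * h s') := by
          rw [← Finset.sum_mul, hd1 s, one_mul]
  -- h + g ≤ Tc h
  have hstep : ∀ s, h s + g ≤ Tc c r p h s := by
    intro s
    unfold Tc
    apply le_min
    · rw [← Heval s]; exact hDle s
    · have h1 : Finset.univ.inf' Finset.univ_nonempty h + g ≤
          Finset.univ.inf' Finset.univ_nonempty (bellman r p h) := by
        apply Finset.le_inf'
        intro x _
        have hdx := hDle x
        rw [Heval x] at hdx
        have hix : Finset.univ.inf' Finset.univ_nonempty h ≤ h x :=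
          Finset.inf'_le _ (Finset.mem_univ x)
        linarith
      have h2 : h s ≤ Finset.univ.inf' Finset.univ_nonempty h + c := by
        have hA : h s ≤ Finset.univ.sup' Finset.univ_nonempty h :=
          Finset.le_sup' _ (Finset.mem_univ s)
        unfold span at hspan
        linarith
      linarith
  have h1 := hstep t
  have h2 := Hopt t
  have h3 : M = h t - hp t := ht
  linarith
end

section
/- Fix a finite MDP, c ≥ 0, and suppose L is a γ-span contraction with 0 ≤ γ < 1. Let (g⁺, h⁺) satisfy T_c h⁺ = h⁺ + g⁺ e, and let (v_n) be the relative value iteration sequence started at v₀ with reference state s̄. Then for every n ≥ 0: min_{s∈S}( T_c v_n(s) − v_n(s) ) − (2γⁿ/(1−γ))·sp(v₁ − v₀) ≤ g⁺ ≤ max_{s∈S}( T_c v_n(s) − v_n(s) ) + (2γⁿ/(1−γ))·sp(v₁ − v₀). -/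
open Finset

section aux

lemma sup'_add_const {α : Type*} [Fintype α] [Nonempty α] (f : α → ℝ) (k : ℝ) :
    Finset.univ.sup' Finset.univ_nonempty (fun i => f i + k)
      = Finset.univ.sup' Finset.univ_nonempty f + k := by
  apply le_antisymm
  · exact Finset.sup'_le _ _ fun i _ =>
      add_le_add_left (Finset.le_sup' f (mem_univ i)) k
  · have h : Finset.univ.sup' Finset.univ_nonempty f
        ≤ Finset.univ.sup' Finset.univ_nonempty (fun i => f i + k) - k :=
      Finset.sup'_le _ _ fun i _ => by
        have := Finset.le_sup' (fun i => f i + k) (mem_univ i); linarith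
    linarith

lemma inf'_add_const {α : Type*} [Fintype α] [Nonempty α] (f : α → ℝ) (k : ℝ) :
    Finset.univ.inf' Finset.univ_nonempty (fun i => f i + k)
      = Finset.univ.inf' Finset.univ_nonempty f + k := by
  apply le_antisymm
  · have h : Finset.univ.inf' Finset.univ_nonempty (fun i => f i + k) - k
        ≤ Finset.univ.inf' Finset.univ_nonempty f :=
      Finset.le_inf' _ _ fun i _ => by
        have := Finset.inf'_le (fun i => f i + k) (mem_univ i); linarith
    linarith
  · exact Finset.le_inf' _ _ fun i _ =>
      add_le_add_left (Finset.inf'_le f (mem_univ i)) k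

variable {S : Type*} [Fintype S] [Nonempty S] {A : S → Type*}
    [∀ s, Fintype (A s)] [∀ s, Nonempty (A s)]
    (r : ∀ s, A s → ℝ) (p : ∀ s, A s → S → ℝ)

lemma bellman_mono (hp0 : ∀ s a s', 0 ≤ p s a s') {u w : S → ℝ} (h : ∀ s, u s ≤ w s)
    (s : S) : bellman r p u s ≤ bellman r p w s := by
  refine Finset.sup'_mono_fun fun a _ => ?_
  exact add_le_add_right (Finset.sum_le_sum fun s' _ =>
    mul_le_mul_of_nonneg_left (h s') (hp0 s a s')) _

lemma bellman_shift (hp1 : ∀ s a, ∑ s', p s a s' = 1) (u : S → ℝ) (k : ℝ) (s : S) :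
    bellman r p (fun x => u x + k) s = bellman r p u s + k := by
  unfold bellman
  rw [← sup'_add_const]
  congr 1; funext a
  have : ∑ s', p s a s' * (u s' + k) = (∑ s', p s a s' * u s') + k := by
    simp [mul_add, Finset.sum_add_distrib, ← Finset.sum_mul, hp1 s a]
  rw [this]; ring

lemma Tc_mono (hp0 : ∀ s a s', 0 ≤ p s a s') (c : ℝ) {u w : S → ℝ} (h : ∀ s, u s ≤ w s)
    (s : S) : Tc c r p u s ≤ Tc c r p w s := by
  unfold Tc
  exact min_le_min (bellman_mono r p hp0 h s)
    (add_le_add_left (Finset.le_inf' _ _ fun x _ =>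
      le_trans (Finset.inf'_le _ (mem_univ x)) (bellman_mono r p hp0 h x)) c)

lemma Tc_shift (hp1 : ∀ s a, ∑ s', p s a s' = 1) (c : ℝ) (u : S → ℝ) (k : ℝ) (s : S) :
    Tc c r p (fun x => u x + k) s = Tc c r p u s + k := by
  unfold Tc
  have h1 : ∀ x, bellman r p (fun x => u x + k) x = bellman r p u x + k :=
    bellman_shift r p hp1 u k
  rw [h1, show (Finset.univ.inf' Finset.univ_nonempty (bellman r p fun x => u x + k))
      = Finset.univ.inf' Finset.univ_nonempty (bellman r p u) + k by
    rw [← inf'_add_const]; exact Finset.inf'_congr _ rfl fun x _ => h1 x]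
  have h2 : Finset.univ.inf' Finset.univ_nonempty (bellman r p u) + k + c
      = (Finset.univ.inf' Finset.univ_nonempty (bellman r p u) + c) + k := by ring
  rw [h2, min_add_add_right]

lemma nat_bound {a b C : ℝ} (h : ∀ n : ℕ, (n : ℝ) * (a - b) ≤ C) : a ≤ b := by
  by_contra hlt
  push_neg at hlt
  have hab : 0 < a - b := sub_pos.mpr hlt
  obtain ⟨n, hn⟩ := exists_nat_gt (C / (a - b))
  have := (div_lt_iff₀ hab).mp hn
  linarith [h n]

end aux

theorem Tc_gain_sandwich {S : Type*} [Fintype S] [Nonempty S] {A : S → Type*}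
    [∀ s, Fintype (A s)] [∀ s, Nonempty (A s)]
    (r : ∀ s, A s → ℝ) (p : ∀ s, A s → S → ℝ)
    (hp0 : ∀ s a s', 0 ≤ p s a s') (hp1 : ∀ s a, ∑ s', p s a s' = 1)
    (c : ℝ) (hc : 0 ≤ c)
    (γ : ℝ) (hγ0 : 0 ≤ γ) (hγ1 : γ < 1)
    (hL : ∀ u v : S → ℝ,
      span (fun s => bellman r p u s - bellman r p v s) ≤ γ * span (fun s => u s - v s))
    (gp : ℝ) (hp : S → ℝ) (Hopt : ∀ s, Tc c r p hp s = hp s + gp)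
    (v : ℕ → S → ℝ) (sbar : S)
    (hv : ∀ n s, v (n + 1) s = Tc c r p (v n) s - Tc c r p (v n) sbar) :
    ∀ n : ℕ,
      Finset.univ.inf' Finset.univ_nonempty (fun s => Tc c r p (v n) s - v n s)
          - 2 * γ ^ n / (1 - γ) * span (fun s => v 1 s - v 0 s) ≤ gp ∧
        gp ≤ Finset.univ.sup' Finset.univ_nonempty (fun s => Tc c r p (v n) s - v n s)
          + 2 * γ ^ n / (1 - γ) * span (fun s => v 1 s - v 0 s) := by
  intro n
  set u : S → ℝ := v n with hu
  set T : (S → ℝ) → S → ℝ := Tc c r p with hT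
  set w : ℕ → S → ℝ := fun k => T^[k] u with hw
  have hw0 : w 0 = u := rfl
  have hwS : ∀ k, w (k + 1) = T (w k) := fun k => Function.iterate_succ_apply' T k u
  obtain ⟨s0⟩ := (inferInstance : Nonempty S)
  -- nonnegativity of the error term
  have h1γ : 0 < 1 - γ := sub_pos.mpr hγ1
  have hspan0 : 0 ≤ span (fun s => v 1 s - v 0 s) := by
    unfold span
    have h1 : Finset.univ.inf' Finset.univ_nonempty (fun s => v 1 s - v 0 s)
        ≤ (fun s => v 1 s - v 0 s) s0 := Finset.inf'_le _ (mem_univ s0)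
    have h2 := Finset.le_sup' (fun s => v 1 s - v 0 s) (mem_univ s0)
    simp only at h1 h2
    linarith
  have hcoef : 0 ≤ 2 * γ ^ n / (1 - γ) * span (fun s => v 1 s - v 0 s) := by
    apply mul_nonneg _ hspan0
    exact div_nonneg (by positivity) h1γ.le
  -- upper bound: gp ≤ M
  set M := Finset.univ.sup' Finset.univ_nonempty (fun s => T u s - u s) with hM
  set m := Finset.univ.inf' Finset.univ_nonempty (fun s => T u s - u s) with hm
  have hTuM : ∀ s, T u s ≤ u s + M := by
    intro s
    have := Finset.le_sup' (fun s => T u s - u s) (mem_univ s)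
    simp only [← hM] at this; linarith
  have hTum : ∀ s, u s + m ≤ T u s := by
    intro s
    have := Finset.inf'_le (fun s => T u s - u s) (mem_univ s)
    simp only [← hm] at this; linarith
  set K := Finset.univ.sup' Finset.univ_nonempty (fun s => u s - hp s) with hK
  set K' := Finset.univ.sup' Finset.univ_nonempty (fun s => hp s - u s) with hK'
  have hKb : ∀ s, u s - hp s ≤ K := by
    intro s
    have := Finset.le_sup' (fun s => u s - hp s) (mem_univ s)
    simp only [← hK] at this; simpa using this
  have hK'b : ∀ s, hp s - u s ≤ K' := by
    intro s
    have := Finset.le_sup' (fun s => hp s - u s) (mem_univ s)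
    simp only [← hK'] at this; simpa using this
  -- w k ≤ u + k*M
  have upper1 : ∀ k s, w k s ≤ u s + k * M := by
    intro k
    induction k with
    | zero => intro s; simp [hw0]
    | succ k ih =>
      intro s
      rw [hwS]
      have h1 : T (w k) s ≤ T (fun x => u x + k * M) s :=
        Tc_mono r p hp0 c ih s
      have h2 : T (fun x => u x + (k : ℝ) * M) s = T u s + k * M :=
        Tc_shift r p hp1 c u _ s
      have h3 := hTuM s
      push_cast
      rw [hT] at *
      linarith [h1, h2 ▸ h1]
  -- hp + (k*gp - K') ≤ w k
  have lower1 : ∀ (k : ℕ) (s : S), hp s + ((k : ℝ) * gp - K') ≤ w k s := by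
    intro k
    induction k with
    | zero => intro s; have := hK'b s; simp [hw0]; linarith
    | succ k ih =>
      intro s
      rw [hwS]
      have h1 : T (fun x => hp x + ((k : ℝ) * gp - K')) s ≤ T (w k) s :=
        Tc_mono r p hp0 c ih s
      have h2 : T (fun x => hp x + ((k : ℝ) * gp - K')) s = T hp s + ((k : ℝ) * gp - K') :=
        Tc_shift r p hp1 c hp _ s
      have h3 : T hp s = hp s + gp := Hopt s
      push_cast
      linarith
  -- u + k*m ≤ w k
  have lower2 : ∀ (k : ℕ) (s : S), u s + (k : ℝ) * m ≤ w k s := by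
    intro k
    induction k with
    | zero => intro s; simp [hw0]
    | succ k ih =>
      intro s
      rw [hwS]
      have h1 : T (fun x => u x + (k : ℝ) * m) s ≤ T (w k) s :=
        Tc_mono r p hp0 c ih s
      have h2 : T (fun x => u x + (k : ℝ) * m) s = T u s + (k : ℝ) * m :=
        Tc_shift r p hp1 c u _ s
      have h3 := hTum s
      push_cast
      linarith
  -- w k ≤ hp + (k*gp + K)
  have upper2 : ∀ (k : ℕ) (s : S), w k s ≤ hp s + ((k : ℝ) * gp + K) := by
    intro k
    induction k with
    | zero => intro s; have := hKb s; simp [hw0]; linarith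
    | succ k ih =>
      intro s
      rw [hwS]
      have h1 : T (w k) s ≤ T (fun x => hp x + ((k : ℝ) * gp + K)) s :=
        Tc_mono r p hp0 c ih s
      have h2 : T (fun x => hp x + ((k : ℝ) * gp + K)) s = T hp s + ((k : ℝ) * gp + K) :=
        Tc_shift r p hp1 c hp _ s
      have h3 : T hp s = hp s + gp := Hopt s
      push_cast
      linarith
  have hgpM : gp ≤ M := by
    apply nat_bound (C := u s0 - hp s0 + K')
    intro k
    have h1 := lower1 k s0
    have h2 := upper1 k s0
    nlinarith
  have hmgp : m ≤ gp := by
    apply nat_bound (C := hp s0 - u s0 + K)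
    intro k
    have h1 := lower2 k s0
    have h2 := upper2 k s0
    nlinarith
  constructor
  · linarith
  · linarith
end

section
/- Fix a finite MDP and a randomized decision rule d, with transition matrix P_d(s,s') = Σ_{a∈A_s} d(s,a) p(s'|s,a) and reward vector r_d(s) = Σ_{a∈A_s} d(s,a) r(s,a). Let P* be any matrix indexed by S × S with nonnegative entries whose rows sum to 1 and which satisfies P* P_d = P*, and set g = P* r_d ∈ ℝ^S. Then for every v ∈ ℝ^S and every s ∈ S: min_{x∈S}( L_d v(x) − v(x) ) ≤ g(s) ≤ max_{x∈S}( L_d v(x) − v(x) ). -/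
open Finset

theorem gain_bounds_via_stationary_matrix {S : Type*} [Fintype S] [Nonempty S] {A : S → Type*}
    [∀ s, Fintype (A s)] [∀ s, Nonempty (A s)]
    (r : ∀ s, A s → ℝ) (p : ∀ s, A s → S → ℝ)
    (hp0 : ∀ s a s', 0 ≤ p s a s') (hp1 : ∀ s a, ∑ s', p s a s' = 1)
    (d : ∀ s, A s → ℝ) (hd0 : ∀ s a, 0 ≤ d s a) (hd1 : ∀ s, ∑ a, d s a = 1)
    (Pstar : S → S → ℝ)
    (hP0 : ∀ s s', 0 ≤ Pstar s s')
    (hP1 : ∀ s, ∑ s', Pstar s s' = 1)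
    -- `P* P_d = P*`, where `P_d s s' = Σ_a d s a * p s a s'`
    (hPfix : ∀ s s'', ∑ s', Pstar s s' * (∑ a, d s' a * p s' a s'') = Pstar s s'')
    -- `g = P* r_d`, where `r_d s = Σ_a d s a * r s a`
    (g : S → ℝ) (hg : ∀ s, g s = ∑ s', Pstar s s' * (∑ a, d s' a * r s' a)) :
    ∀ (v : S → ℝ) (s : S),
      Finset.univ.inf' Finset.univ_nonempty (fun x => bellmanD r p d v x - v x) ≤ g s ∧
        g s ≤ Finset.univ.sup' Finset.univ_nonempty (fun x => bellmanD r p d v x - v x) := by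

  intro v s
  have expand : ∀ x, bellmanD r p d v x
      = (∑ a, d x a * r x a) + ∑ s'', (∑ a, d x a * p x a s'') * v s'' := by
    intro x
    simp only [bellmanD, mul_add, Finset.sum_add_distrib]
    congr 1
    simp only [Finset.mul_sum, Finset.sum_mul]
    rw [Finset.sum_comm]
    simp [mul_assoc]
  have key : g s = ∑ s', Pstar s s' * (bellmanD r p d v s' - v s') := by
    have : ∑ s', Pstar s s' * (bellmanD r p d v s' - v s')
        = (∑ s', Pstar s s' * (∑ a, d s' a * r s' a))
          + ((∑ s', Pstar s s' * ∑ s'', (∑ a, d s' a * p s' a s'') * v s'')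
              - ∑ s', Pstar s s' * v s') := by
      rw [← Finset.sum_sub_distrib, ← Finset.sum_add_distrib]
      apply Finset.sum_congr rfl
      intro x _
      rw [expand x]; ring
    rw [this, hg]
    have h2 : (∑ s', Pstar s s' * ∑ s'', (∑ a, d s' a * p s' a s'') * v s'')
        = ∑ s', Pstar s s' * v s' := by
      have : ∀ s', Pstar s s' * ∑ s'', (∑ a, d s' a * p s' a s'') * v s''
          = ∑ s'', Pstar s s' * (∑ a, d s' a * p s' a s'') * v s'' := by
        intro s'; rw [Finset.mul_sum]; simp [mul_assoc]
      simp only [this]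
      rw [Finset.sum_comm]
      apply Finset.sum_congr rfl
      intro s'' _
      rw [← Finset.sum_mul, hPfix]
    rw [h2]; ring
  constructor
  · rw [key]
    have h := Finset.sum_le_sum (s := Finset.univ) (f := fun s' => Pstar s s' *
        Finset.univ.inf' Finset.univ_nonempty (fun x => bellmanD r p d v x - v x))
      (g := fun s' => Pstar s s' * (bellmanD r p d v s' - v s'))
      (fun i _ => mul_le_mul_of_nonneg_left
        (Finset.inf'_le _ (Finset.mem_univ i)) (hP0 s i))
    calc Finset.univ.inf' Finset.univ_nonempty (fun x => bellmanD r p d v x - v x)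
        = ∑ s', Pstar s s' * Finset.univ.inf' Finset.univ_nonempty
            (fun x => bellmanD r p d v x - v x) := by
          rw [← Finset.sum_mul, hP1, one_mul]
      _ ≤ _ := h
  · rw [key]
    have h := Finset.sum_le_sum (s := Finset.univ)
      (f := fun s' => Pstar s s' * (bellmanD r p d v s' - v s'))
      (g := fun s' => Pstar s s' * Finset.univ.sup' Finset.univ_nonempty
        (fun x => bellmanD r p d v x - v x))
      (fun i _ => mul_le_mul_of_nonneg_left
        (Finset.le_sup' (fun x => bellmanD r p d v x - v x) (Finset.mem_univ i)) (hP0 s i))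
    calc ∑ s', Pstar s s' * (bellmanD r p d v s' - v s') ≤ _ := h
      _ = _ := by rw [← Finset.sum_mul, hP1, one_mul]
end

section
/- Let two finite MDPs share the same nonempty finite state set S, the same finite action sets A_s, and the same rewards r(s,a), but have transition kernels p and p' respectively, and let η ≥ 0. If Σ_{s'∈S} |p(s'|s,a) − p'(s'|s,a)| ≤ 2η for every state s and action a ∈ A_s, then the corresponding optimal Bellman operators L and L' satisfy max_{s∈S} |Lv(s) − L'v(s)| ≤ η·sp(v) for every v ∈ ℝ^S. -/
open Finset

theorem bellman_kernel_perturbation {S : Type*} [Fintype S] [Nonempty S] {A : S → Type*}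
    [∀ s, Fintype (A s)] [∀ s, Nonempty (A s)]
    (r : ∀ s, A s → ℝ) (p p' : ∀ s, A s → S → ℝ)
    (hp0 : ∀ s a s', 0 ≤ p s a s') (hp1 : ∀ s a, ∑ s', p s a s' = 1)
    (hp'0 : ∀ s a s', 0 ≤ p' s a s') (hp'1 : ∀ s a, ∑ s', p' s a s' = 1)
    (η : ℝ) (hη : 0 ≤ η)
    (hclose : ∀ s a, ∑ s', |p s a s' - p' s a s'| ≤ 2 * η) :
    ∀ v : S → ℝ,
      Finset.univ.sup' Finset.univ_nonempty
          (fun s => |bellman r p v s - bellman r p' v s|) ≤ η * span v := by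
  intro v
  set M := Finset.univ.sup' Finset.univ_nonempty v with hM
  set m := Finset.univ.inf' Finset.univ_nonempty v with hm
  have key : ∀ s (a : A s),
      |(∑ s', p s a s' * v s') - ∑ s', p' s a s' * v s'| ≤ η * span v := by
    intro s a
    have hc : ∑ s', (p s a s' - p' s a s') * ((M + m) / 2) = 0 := by
      rw [← Finset.sum_mul, Finset.sum_sub_distrib, hp1 s a, hp'1 s a]; ring
    have hrw : (∑ s', p s a s' * v s') - ∑ s', p' s a s' * v s'
        = ∑ s', (p s a s' - p' s a s') * (v s' - (M + m) / 2) := by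
      rw [eq_comm]
      calc ∑ s', (p s a s' - p' s a s') * (v s' - (M + m) / 2)
          = ∑ s', ((p s a s' * v s' - p' s a s' * v s')
              - (p s a s' - p' s a s') * ((M + m) / 2)) := by
            exact Finset.sum_congr rfl (fun s' _ => by ring)
        _ = (∑ s', (p s a s' * v s' - p' s a s' * v s'))
              - ∑ s', (p s a s' - p' s a s') * ((M + m) / 2) :=
            Finset.sum_sub_distrib _ _
        _ = (∑ s', p s a s' * v s') - ∑ s', p' s a s' * v s' := by
            rw [hc, Finset.sum_sub_distrib]; ring
    rw [hrw]
    calc |∑ s', (p s a s' - p' s a s') * (v s' - (M + m) / 2)|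
        ≤ ∑ s', |(p s a s' - p' s a s') * (v s' - (M + m) / 2)| :=
          Finset.abs_sum_le_sum_abs _ _
      _ ≤ ∑ s', |p s a s' - p' s a s'| * (span v / 2) := by
          apply Finset.sum_le_sum
          intro s' _
          rw [abs_mul]
          apply mul_le_mul_of_nonneg_left _ (abs_nonneg _)
          have hle : v s' ≤ M := Finset.le_sup' v (Finset.mem_univ s')
          have hge : m ≤ v s' := Finset.inf'_le v (Finset.mem_univ s')
          rw [abs_le]
          constructor <;> · simp only [span, ← hM, ← hm]; linarith
      _ = (∑ s', |p s a s' - p' s a s'|) * (span v / 2) := by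
          rw [Finset.sum_mul]
      _ ≤ 2 * η * (span v / 2) := by
          apply mul_le_mul_of_nonneg_right (hclose s a)
          have h1 : m ≤ v (Classical.arbitrary S) := Finset.inf'_le v (Finset.mem_univ _)
          have h2 : v (Classical.arbitrary S) ≤ M := Finset.le_sup' v (Finset.mem_univ _)
          simp only [span, ← hM, ← hm]; linarith
      _ = η * span v := by ring
  apply Finset.sup'_le
  intro s _
  rw [abs_sub_le_iff]
  constructor
  · rw [sub_le_iff_le_add, bellman]
    apply Finset.sup'_le
    intro a _
    have := key s a
    rw [abs_le] at this
    have h2 : r s a + ∑ s', p' s a s' * v s' ≤ bellman r p' v s :=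
      Finset.le_sup' (fun a : A s => r s a + ∑ s', p' s a s' * v s') (Finset.mem_univ a)
    linarith [this.2]
  · rw [sub_le_iff_le_add]
    show bellman r p' v s ≤ _
    apply Finset.sup'_le
    intro a _
    have := key s a
    rw [abs_le] at this
    have h2 : r s a + ∑ s', p s a s' * v s' ≤ bellman r p v s :=
      Finset.le_sup' (fun a : A s => r s a + ∑ s', p s a s' * v s') (Finset.mem_univ a)
    linarith [this.1]
end

section
/- Let S be a finite set and q : S → ℝ a probability vector (q(s) ≥ 0 for all s and Σ_{s∈S} q(s) = 1) with nonempty support. Then Σ_{s∈S} √( q(s)(1 − q(s)) ) ≤ √( |supp(q)| − 1 ), where supp(q) = { s ∈ S : q(s) > 0 }. -/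
open Finset

theorem sum_sqrt_var_le_sqrt_support {S : Type*} [Fintype S] (q : S → ℝ)
    (hq0 : ∀ s, 0 ≤ q s) (hq1 : ∑ s, q s = 1)
    (hsupp : (Finset.univ.filter fun s => 0 < q s).Nonempty) :
    ∑ s, Real.sqrt (q s * (1 - q s)) ≤
      Real.sqrt (((Finset.univ.filter fun s => 0 < q s).card : ℝ) - 1) := by
  set T := Finset.univ.filter fun s => 0 < q s with hT
  have hq_le : ∀ s, q s ≤ 1 := by
    intro s
    rw [← hq1]
    exact Finset.single_le_sum (fun i _ => hq0 i) (mem_univ s)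
  have hsum : ∑ s, Real.sqrt (q s * (1 - q s)) = ∑ s ∈ T, Real.sqrt (q s) * Real.sqrt (1 - q s) := by
    rw [← Finset.sum_filter_add_sum_filter_not univ (fun s => 0 < q s)]
    have h0 : ∑ s ∈ univ.filter (fun s => ¬ 0 < q s), Real.sqrt (q s * (1 - q s)) = 0 := by
      apply Finset.sum_eq_zero
      intro s hs
      have : q s = 0 := le_antisymm (not_lt.mp (mem_filter.mp hs).2) (hq0 s)
      simp [this]
    rw [h0, add_zero]
    exact Finset.sum_congr rfl fun s _ => Real.sqrt_mul (hq0 s) _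
  have hsumT : ∑ s ∈ T, q s = 1 := by
    rw [← hq1]
    apply Finset.sum_subset (Finset.subset_univ T)
    intro s _ hs
    simp only [hT, mem_filter, mem_univ, true_and, not_lt] at hs
    exact le_antisymm hs (hq0 s)
  have h1 : ∑ s ∈ T, (1 - q s) = (T.card : ℝ) - 1 := by
    rw [Finset.sum_sub_distrib, hsumT, Finset.sum_const, nsmul_eq_mul, mul_one]
  calc ∑ s, Real.sqrt (q s * (1 - q s))
      = ∑ s ∈ T, Real.sqrt (q s) * Real.sqrt (1 - q s) := hsum
    _ ≤ Real.sqrt (∑ s ∈ T, q s) * Real.sqrt (∑ s ∈ T, (1 - q s)) :=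
        Real.sum_sqrt_mul_sqrt_le T hq0 (fun s => by linarith [hq_le s])
    _ = Real.sqrt ((T.card : ℝ) - 1) := by rw [hsumT, h1, Real.sqrt_one, one_mul]
end
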